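/- arXiv:2204.03298 — 2 statements merged into one kernel-verified Lean document; each statement's English description precedes it below -/
import Mathlib

section
/- Let ⟪-,-⟫ be a double bracket on A associated with a swap-commuting A-bimodule structure on A⊗A, assume there exists an A-bimodule structure ·₃ on A⊗A⊗A such that the double Jacobiator satisfies ⟪a,b,c₁c₂⟫ = c₁ ·₃ ⟪a,b,c₂⟫ + ⟪a,b,c₁⟫ ·₃ c₂ for all a,b,c₁,c₂ ∈ A, and let S = {a_j : j ∈ J} generate A as a k-algebra. If ⟪a_i,a_j⟫ = λ_{ij} · 1⊗1 with λ_{ij} ∈ k and λ_{ij} = -λ_{ji} for all i,j ∈ J, then ⟪-,-⟫ is a double Poisson bracket. -/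
/-!
Unit Leibniz rules give `⟪a, 1⟫ = 0`, so every term of the Jacobiator of three generators
is `⟪x, λ 1 ⊗ 1⟫_L = 0`. Since the Jacobiator is a derivation in its last argument, it
vanishes once it vanishes on generators in that argument; its cyclic symmetry
`⟪a,b,c⟫ = τ_{(123)} ⟪b,c,a⟫` moves each argument into the last slot in turn, so three such
extensions reach arbitrary `a, b, c`.
-/

open scoped TensorProduct

noncomputable section

/-- A (`k`-linear) `A`-bimodule-type structure on a `k`-module `M`,
given by a three-slot action `a · d · b`. -/
structure BimodOn (k A M : Type*) [CommSemiring k] [Ring A] [Algebra k A]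
    [AddCommMonoid M] [Module k M] where
  act : A → M → A → M
  add_left : ∀ (a a' : A) (d : M) (b : A), act (a + a') d b = act a d b + act a' d b
  add_mid : ∀ (a : A) (d d' : M) (b : A), act a (d + d') b = act a d b + act a d' b
  add_right : ∀ (a : A) (d : M) (b b' : A), act a d (b + b') = act a d b + act a d b'
  smul_left : ∀ (c : k) (a : A) (d : M) (b : A), act (c • a) d b = c • act a d b
  smul_mid : ∀ (c : k) (a : A) (d : M) (b : A), act a (c • d) b = c • act a d b
  smul_right : ∀ (c : k) (a : A) (d : M) (b : A), act a d (c • b) = c • act a d b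
  act_one_one : ∀ d : M, act 1 d 1 = d
  act_mul : ∀ (a a' : A) (d : M) (b b' : A), act a (act a' d b') b = act (a * a') d (b' * b)

/-- An `A`-bimodule structure on `A ⊗[k] A`. -/
abbrev BimodStr (k A : Type*) [CommSemiring k] [Ring A] [Algebra k A] :=
  BimodOn k A (A ⊗[k] A)

section Defs

variable (k A : Type*) [CommSemiring k] [Ring A] [Algebra k A]

/-- The swap automorphism `°` of `A ⊗[k] A`, `a ⊗ b ↦ b ⊗ a`. -/
def swapT : A ⊗[k] A →ₗ[k] A ⊗[k] A := (TensorProduct.comm k A A).toLinearMap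

variable {k A}

namespace BimodOn

/-- The swap bimodule structure `a * d * b = (a · d° · b)°` associated with a
bimodule structure on `A ⊗[k] A`. -/
def star (S : BimodStr k A) (a : A) (d : A ⊗[k] A) (b : A) : A ⊗[k] A :=
  swapT k A (S.act a (swapT k A d) b)

/-- A bimodule structure on `A ⊗[k] A` is swap-commuting if it commutes with its
swap bimodule structure. -/
def SwapCommuting (S : BimodStr k A) : Prop :=
  ∀ (a₁ a₂ b₁ b₂ : A) (d : A ⊗[k] A),
    S.act a₁ (S.star a₂ d b₂) b₁ = S.star a₂ (S.act a₁ d b₁) b₂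

end BimodOn

end Defs

/-- A double bracket on `A` associated with a bimodule structure `S` on `A ⊗[k] A`
(with swap bimodule structure `S.star`). -/
structure DoubleBracket {k A : Type*} [CommSemiring k] [Ring A] [Algebra k A]
    (S : BimodStr k A) where
  br : A →ₗ[k] A →ₗ[k] A ⊗[k] A
  antisymm : ∀ a b : A, br a b = - swapT k A (br b a)
  leibniz_right : ∀ a b c : A, br a (b * c) = S.act b (br a c) 1 + S.act 1 (br a b) c
  leibniz_left : ∀ a b c : A, br (b * c) a = S.star b (br c a) 1 + S.star 1 (br b a) c

section Taus

variable (k A : Type*) [CommSemiring k] [Ring A] [Algebra k A]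

/-- `τ_{(123)}` on `A^{⊗3}`: `a ⊗ b ⊗ c ↦ c ⊗ a ⊗ b`. -/
def tau123 : (A ⊗[k] A) ⊗[k] A →ₗ[k] (A ⊗[k] A) ⊗[k] A :=
  ((TensorProduct.comm k (A ⊗[k] A) A).trans (TensorProduct.assoc k A A A).symm).toLinearMap

/-- `τ_{(132)}` on `A^{⊗3}`: `a ⊗ b ⊗ c ↦ b ⊗ c ⊗ a`. -/
def tau132 : (A ⊗[k] A) ⊗[k] A →ₗ[k] (A ⊗[k] A) ⊗[k] A :=
  ((TensorProduct.assoc k A A A).trans (TensorProduct.comm k A (A ⊗[k] A))).toLinearMap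

/-- `τ_{(12)}` on `A^{⊗3}`: `a ⊗ b ⊗ c ↦ b ⊗ a ⊗ c`. -/
def tau12 : (A ⊗[k] A) ⊗[k] A →ₗ[k] (A ⊗[k] A) ⊗[k] A :=
  (TensorProduct.congr (TensorProduct.comm k A A) (LinearEquiv.refl k A)).toLinearMap

variable {k A}

/-- `⟪a, -⟫_L : A ⊗ A → A ⊗ A ⊗ A`, `b₁ ⊗ b₂ ↦ ⟪a, b₁⟫ ⊗ b₂`. -/
def trL (br : A →ₗ[k] A →ₗ[k] A ⊗[k] A) (a : A) :
    A ⊗[k] A →ₗ[k] (A ⊗[k] A) ⊗[k] A :=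
  TensorProduct.map (br a) LinearMap.id

/-- The double Jacobiator of a bilinear operation `A × A → A ⊗ A`:
`⟪a,b,c⟫ = ⟪a,⟪b,c⟫⟫_L + τ_{(123)} ⟪b,⟪c,a⟫⟫_L + τ_{(132)} ⟪c,⟪a,b⟫⟫_L`. -/
def jac (br : A →ₗ[k] A →ₗ[k] A ⊗[k] A) (a b c : A) : (A ⊗[k] A) ⊗[k] A :=
  trL br a (br b c) + tau123 k A (trL br b (br c a)) + tau132 k A (trL br c (br a b))

end Taus

end

section

variable {k A : Type*} [CommSemiring k] [Ring A] [Algebra k A]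

namespace BimodOn

lemma act_zero_mid {M : Type*} [AddCommMonoid M] [Module k M] (S : BimodOn k A M) (a b : A) :
    S.act a 0 b = 0 := by
  simpa using S.smul_mid 0 a 0 b

variable {M : Type*} [AddCommGroup M] [Module k M]

lemma eq_zero_of_leibniz_of_adjoin_eq_top (S : BimodOn k A M) (F : A →ₗ[k] M)
    (hF : ∀ x y, F (x * y) = S.act x (F y) 1 + S.act 1 (F x) y)
    {s : Set A} (hs : Algebra.adjoin k s = ⊤) (h0 : ∀ x ∈ s, F x = 0) (a : A) :
    F a = 0 := by
  have hF1 : F 1 = 0 := by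
    simpa [S.act_one_one] using hF 1 1
  have ha : a ∈ Algebra.adjoin k s := hs ▸ Algebra.mem_top
  induction ha using Algebra.adjoin_induction with
  | mem x hx => exact h0 x hx
  | algebraMap r => rw [Algebra.algebraMap_eq_smul_one, map_smul, hF1, smul_zero]
  | add x y _ _ hx hy => rw [map_add, hx, hy, add_zero]
  | mul x y _ _ hx hy => rw [hF, hx, hy, S.act_zero_mid, S.act_zero_mid, add_zero]

end BimodOn

lemma DoubleBracket.br_one {S : BimodStr k A} (D : DoubleBracket S) (a : A) :
    D.br a 1 = 0 := by
  simpa [S.act_one_one] using D.leibniz_right a 1 1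

lemma trL_smul_one_tmul_one {br : A →ₗ[k] A →ₗ[k] A ⊗[k] A} (hbr : ∀ a, br a 1 = 0)
    (a : A) (r : k) : trL br a (r • ((1 : A) ⊗ₜ[k] (1 : A))) = 0 := by
  simp [trL, hbr]

lemma tau123_tau123 (x : (A ⊗[k] A) ⊗[k] A) : tau123 k A (tau123 k A x) = tau132 k A x :=
  LinearMap.congr_fun (f := (tau123 k A).comp (tau123 k A)) (g := tau132 k A)
    (TensorProduct.ext_threefold fun _ _ _ => rfl) x

lemma tau123_tau132 (x : (A ⊗[k] A) ⊗[k] A) : tau123 k A (tau132 k A x) = x :=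
  LinearMap.congr_fun (f := (tau123 k A).comp (tau132 k A)) (g := LinearMap.id)
    (TensorProduct.ext_threefold fun _ _ _ => rfl) x

lemma jac_cyclic (br : A →ₗ[k] A →ₗ[k] A ⊗[k] A) (a b c : A) :
    jac br a b c = tau123 k A (jac br b c a) := by
  rw [jac, jac, map_add, map_add, tau123_tau123, tau123_tau132]
  abel

lemma jac_eq_zero_iff_cyclic (br : A →ₗ[k] A →ₗ[k] A ⊗[k] A) (a b c : A) :
    jac br a b c = 0 ↔ jac br b c a = 0 := by
  rw [jac_cyclic]
  exact LinearEquiv.map_eq_zero_iff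
    ((TensorProduct.comm k (A ⊗[k] A) A).trans (TensorProduct.assoc k A A A).symm)

def jacRight (br : A →ₗ[k] A →ₗ[k] A ⊗[k] A) (a b : A) :
    A →ₗ[k] (A ⊗[k] A) ⊗[k] A where
  toFun := jac br a b
  map_add' x y := by
    simp only [jac, trL, map_add, LinearMap.add_apply, TensorProduct.map_add_left]
    abel
  map_smul' r x := by
    simp only [jac, trL, map_smul, LinearMap.smul_apply, TensorProduct.map_smul_left,
      RingHom.id_apply, smul_add]

end

theorem constant_double_bracket_is_poisson_general
    {k A : Type*} [Field k] [Ring A] [Algebra k A]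
    (S : BimodStr k A) (D : DoubleBracket S)
    (S3 : BimodOn k A ((A ⊗[k] A) ⊗[k] A))
    (hder3 : ∀ a b c₁ c₂ : A, jac D.br a b (c₁ * c₂)
      = S3.act c₁ (jac D.br a b c₂) 1 + S3.act 1 (jac D.br a b c₁) c₂)
    {J : Type*} (gen : J → A) (hgen : Algebra.adjoin k (Set.range gen) = ⊤)
    (lam : J → J → k)
    (hconst : ∀ i j : J, D.br (gen i) (gen j) = lam i j • ((1 : A) ⊗ₜ[k] (1 : A))) :
    ∀ a b c : A, jac D.br a b c = 0 := by
  have on_generators : ∀ i j l : J, jac D.br (gen i) (gen j) (gen l) = 0 := by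
    intro i j l
    simp only [jac, hconst, trL_smul_one_tmul_one D.br_one, map_zero, add_zero]
  have extend : ∀ a b : A, (∀ x ∈ Set.range gen, jac D.br a b x = 0) →
      ∀ c, jac D.br a b c = 0 := fun a b =>
    S3.eq_zero_of_leibniz_of_adjoin_eq_top (jacRight D.br a b) (hder3 a b) hgen
  intro a b c
  refine extend a b (Set.forall_mem_range.2 fun l => ?_) c
  rw [jac_eq_zero_iff_cyclic]
  refine extend b (gen l) (Set.forall_mem_range.2 fun j => ?_) a
  rw [jac_eq_zero_iff_cyclic]
  exact extend (gen l) (gen j) (Set.forall_mem_range.2 fun i => on_generators l j i) b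

/-- Lemma `Jac2`: under the assumptions of Lemma `Jac`, a double bracket
taking constant values on a generating set is a double Poisson bracket. -/
theorem constant_double_bracket_is_poisson
    {k A : Type*} [Field k] [CharZero k] [Ring A] [Algebra k A]
    (S : BimodStr k A) (hS : S.SwapCommuting) (D : DoubleBracket S)
    (S3 : BimodOn k A ((A ⊗[k] A) ⊗[k] A))
    (hder3 : ∀ a b c₁ c₂ : A, jac D.br a b (c₁ * c₂)
      = S3.act c₁ (jac D.br a b c₂) 1 + S3.act 1 (jac D.br a b c₁) c₂)
    {J : Type*} (gen : J → A) (hgen : Algebra.adjoin k (Set.range gen) = ⊤)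
    (lam : J → J → k) (hanti : ∀ i j : J, lam i j = - lam j i)
    (hconst : ∀ i j : J, D.br (gen i) (gen j) = lam i j • ((1 : A) ⊗ₜ[k] (1 : A))) :
    ∀ a b c : A, jac D.br a b c = 0 :=
  constant_double_bracket_is_poisson_general S D S3 hder3 gen hgen lam hconst
end

section
/- Let ⟪-,-⟫₁ be a double bracket on A associated with a swap-commuting A-bimodule structure · on A⊗A, and let ⟪-,-⟫₂ = ⟪-,-⟫₁° be the double bracket associated with the swap bimodule structure * of ·. Then: (i) ⟪-,-⟫₁ is (12)-weak Poisson if and only if ⟪-,-⟫₂ is [(12),(13)]-weak Poisson; (ii) ⟪-,-⟫₁ is [(12),(23)]-weak Poisson if and only if ⟪-,-⟫₂ is [(12),(23)]-weak Poisson. -/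
open scoped TensorProduct

section AuxLemmas

variable {k A : Type*} [CommSemiring k] [Ring A] [Algebra k A]

lemma swapT_swapT (x : A ⊗[k] A) : swapT k A (swapT k A x) = x := by
  induction x using TensorProduct.induction_on with
  | zero => simp
  | tmul u v => simp [swapT]
  | add y z hy hz => rw [map_add, map_add, hy, hz]

lemma tau12_tau12 (x : (A ⊗[k] A) ⊗[k] A) : tau12 k A (tau12 k A x) = x := by
  have : (tau12 k A ∘ₗ tau12 k A : (A ⊗[k] A) ⊗[k] A →ₗ[k] _) = LinearMap.id := by
    apply TensorProduct.ext_threefold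
    intro a b c
    simp [tau12]
  exact DFunLike.congr_fun this x

lemma tau123_tau12 (x : (A ⊗[k] A) ⊗[k] A) :
    tau123 k A (tau12 k A x) = tau12 k A (tau132 k A x) := by
  have : (tau123 k A ∘ₗ tau12 k A : (A ⊗[k] A) ⊗[k] A →ₗ[k] _)
      = tau12 k A ∘ₗ tau132 k A := by
    apply TensorProduct.ext_threefold
    intro a b c
    simp [tau12, tau123, tau132]
  exact DFunLike.congr_fun this x

lemma tau132_tau12 (x : (A ⊗[k] A) ⊗[k] A) :
    tau132 k A (tau12 k A x) = tau12 k A (tau123 k A x) := by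
  have : (tau132 k A ∘ₗ tau12 k A : (A ⊗[k] A) ⊗[k] A →ₗ[k] _)
      = tau12 k A ∘ₗ tau123 k A := by
    apply TensorProduct.ext_threefold
    intro a b c
    simp [tau12, tau123, tau132]
  exact DFunLike.congr_fun this x

lemma trL_swap (br br₂ : A →ₗ[k] A →ₗ[k] A ⊗[k] A) (x : A)
    (h : ∀ y, br₂ x y = swapT k A (br x y)) (d : A ⊗[k] A) :
    trL br₂ x d = tau12 k A (trL br x d) := by
  induction d using TensorProduct.induction_on with
  | zero => simp
  | tmul u v => simp [trL, tau12, swapT, h u]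
  | add y z hy hz => rw [map_add, map_add, map_add, hy, hz]

end AuxLemmas

/-- Proposition `Op-Equ-wk1`: for a double bracket `⟪-,-⟫₁` associated
with a swap-commuting bimodule structure and its swap-equivalent `⟪-,-⟫₂ = ° ∘ ⟪-,-⟫₁`
(associated with the swap bimodule structure):
(i) `⟪-,-⟫₁` is `(12)`-weak Poisson iff `⟪-,-⟫₂` is `[(12),(13)]`-weak Poisson;
(ii) `⟪-,-⟫₁` is `[(12),(23)]`-weak Poisson iff `⟪-,-⟫₂` is `[(12),(23)]`-weak Poisson. -/
theorem swap_weak_poisson_correspondence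
    {k A : Type*} [Field k] [CharZero k] [Ring A] [Algebra k A]
    (S₁ : BimodStr k A) (h₁ : S₁.SwapCommuting) (D₁ : DoubleBracket S₁)
    (S₂ : BimodStr k A)
    (hact : ∀ (a b : A) (d : A ⊗[k] A), S₂.act a d b = S₁.star a d b)
    (D₂ : DoubleBracket S₂)
    (hbr : ∀ a b : A, D₂.br a b = swapT k A (D₁.br a b)) :
    ((∀ a b c : A, jac D₁.br a b c = tau12 k A (jac D₁.br b a c)) ↔
      (∀ a b c : A, jac D₂.br a b c = tau12 k A (jac D₂.br c b a))) ∧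
    ((∀ a b c : A, jac D₁.br a b c = tau12 k A (jac D₁.br a c b)) ↔
      (∀ a b c : A, jac D₂.br a b c = tau12 k A (jac D₂.br a c b))) := by
  have h2 : ∀ x y : A, D₂.br x y = - D₁.br y x := by
    intro x y
    rw [hbr, D₁.antisymm y x, neg_neg]
  have hmap : ∀ (x : A) (d : A ⊗[k] A),
      trL D₂.br x d = tau12 k A (trL D₁.br x d) := fun x d =>
    trL_swap D₁.br D₂.br x (fun y => hbr x y) d
  have key : ∀ a b c : A, jac D₂.br a b c = - tau12 k A (jac D₁.br a c b) := by
    intro a b c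
    have e1 : trL D₂.br a (D₂.br b c) = - tau12 k A (trL D₁.br a (D₁.br c b)) := by
      rw [h2 b c, map_neg, hmap]
    have e2 : tau123 k A (trL D₂.br b (D₂.br c a))
        = - tau12 k A (tau132 k A (trL D₁.br b (D₁.br a c))) := by
      rw [h2 c a, map_neg, map_neg, hmap, tau123_tau12]
    have e3 : tau132 k A (trL D₂.br c (D₂.br a b))
        = - tau12 k A (tau123 k A (trL D₁.br c (D₁.br b a))) := by
      rw [h2 a b, map_neg, map_neg, hmap, tau132_tau12]
    rw [jac, e1, e2, e3, jac, map_add, map_add]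
    abel
  have key' : ∀ a b c : A, jac D₁.br a b c = - tau12 k A (jac D₂.br a c b) := by
    intro a b c
    rw [key a c b, map_neg, tau12_tau12, neg_neg]
  constructor
  · constructor
    · intro H a b c
      rw [key a b c, key c b a, map_neg, tau12_tau12, H c a b]
    · intro H a b c
      rw [key' a b c, key' b a c, map_neg, tau12_tau12, H b c a]
  · constructor
    · intro H a b c
      rw [key a b c, key a c b, map_neg, tau12_tau12, H a b c]
    · intro H a b c
      rw [key' a b c, key' a c b, map_neg, tau12_tau12, H a b c]
end
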